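/- Assume good X and good Y. Then freshness for a substituted term decomposes into freshness for its participants: fresh zs z (X[Y/y]_ys) if and only if ((zs,z) = (ys,y) or fresh zs z X) and (fresh ys y X or fresh zs z Y). -/

import Mathlib

open scoped Classical

universe u

section Binding

variable (var varsort index bindex opsym : Type u)

/-! ### Inputs -/

/-- An `(α,β)`-input: a partial function from `α` to `β`. -/
abbrev Input (α β : Type u) : Type u := α → Option β

/-- The domain of an input. -/
def idom {α β : Type u} (inp : Input α β) : Set α := {a | inp a ≠ none}

/-- The componentwise lifting of a predicate to inputs. -/
def liftP {α β : Type u} (P : β → Prop) (inp : Input α β) : Prop :=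
  ∀ a b, inp a = some b → P b

/-- The componentwise lifting of a function to inputs. -/
def liftF {α β γ : Type u} (f : β → γ) (inp : Input α β) : Input α γ :=
  fun a => (inp a).map f

/-- An input is small if its domain has cardinality smaller than that of `var`. -/
def smallDom {α β : Type u} (inp : Input α β) : Prop :=
  Cardinal.mk (idom inp) < Cardinal.mk var

/-! ### Quasiterms -/

mutual
/-- Quasiterms: raw terms before quotienting by alpha-equivalence. -/
inductive QTerm : Type u where
  | qVar : varsort → var → QTerm
  | qOp : opsym → (index → Option QTerm) → (bindex → Option QAbs) → QTerm
/-- Quasiabstractions. -/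
inductive QAbs : Type u where
  | qAbs : varsort → var → QTerm → QAbs
end

/-- Transposition of two variables. -/
noncomputable def swapVar (z1 z2 x : var) : var :=
  if x = z1 then z2 else if x = z2 then z1 else x

/-- Sort-aware transposition of variables (acts only on variables of varsort `zs`). -/
noncomputable def swapVarS (zs xs : varsort) (z1 z2 x : var) : var :=
  if xs = zs then swapVar var z1 z2 x else x

variable {var varsort index bindex opsym}

/-- Swapping of the variables `z1`, `z2` at varsort `zs` in a quasiterm
(transposing them everywhere, including binding positions). -/
noncomputable def qSwap (z1 z2 : var) (zs : varsort) :
    QTerm var varsort index bindex opsym → QTerm var varsort index bindex opsym :=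
  QTerm.rec (motive_1 := fun _ => QTerm var varsort index bindex opsym)
    (motive_2 := fun _ => QAbs var varsort index bindex opsym)
    (motive_3 := fun _ => Option (QTerm var varsort index bindex opsym))
    (motive_4 := fun _ => Option (QAbs var varsort index bindex opsym))
    (fun xs x => .qVar xs (swapVarS var varsort zs xs z1 z2 x))
    (fun d _ _ rinp rbinp => .qOp d rinp rbinp)
    (fun xs x _ rX => .qAbs xs (swapVarS var varsort zs xs z1 z2 x) rX)
    none (fun _ r => some r) none (fun _ r => some r)

/-- Swapping of variables in a quasiabstraction. -/
noncomputable def qSwapAbs (z1 z2 : var) (zs : varsort) :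
    QAbs var varsort index bindex opsym → QAbs var varsort index bindex opsym
  | .qAbs xs x X => .qAbs xs (swapVarS var varsort zs xs z1 z2 x) (qSwap z1 z2 zs X)

/-! ### Freshness and goodness -/

mutual
/-- `QFresh ys y X`: the variable `y` of varsort `ys` has no free occurrence in `X`. -/
inductive QFresh : varsort → var → QTerm var varsort index bindex opsym → Prop where
  | qVar : ∀ {ys y xs x}, (ys, y) ≠ (xs, x) → QFresh ys y (.qVar xs x)
  | qOp : ∀ {ys y d inp binp}, (∀ i X, inp i = some X → QFresh ys y X) →
      (∀ j A, binp j = some A → QFreshAbs ys y A) → QFresh ys y (.qOp d inp binp)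
/-- Freshness for quasiabstractions. -/
inductive QFreshAbs : varsort → var → QAbs var varsort index bindex opsym → Prop where
  | qAbs_bound : ∀ {xs x X}, QFreshAbs xs x (.qAbs xs x X)
  | qAbs_body : ∀ {ys y xs x X}, QFresh ys y X → QFreshAbs ys y (.qAbs xs x X)
end

mutual
/-- Good quasiterms: all constructors branch less than `|var|`. -/
inductive QGood : QTerm var varsort index bindex opsym → Prop where
  | qVar : ∀ {xs x}, QGood (.qVar xs x)
  | qOp : ∀ {d inp binp}, (∀ i X, inp i = some X → QGood X) →
      (∀ j A, binp j = some A → QGoodAbs A) →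
      smallDom var inp → smallDom var binp → QGood (.qOp d inp binp)
/-- Good quasiabstractions. -/
inductive QGoodAbs : QAbs var varsort index bindex opsym → Prop where
  | qAbs : ∀ {xs x X}, QGood X → QGoodAbs (.qAbs xs x X)
end

/-! ### Alpha-equivalence -/

mutual
/-- Alpha-equivalence of quasiterms. -/
inductive Alpha : QTerm var varsort index bindex opsym →
    QTerm var varsort index bindex opsym → Prop where
  | qVar : ∀ {xs x}, Alpha (.qVar xs x) (.qVar xs x)
  | qOp : ∀ {d inp binp inp' binp'},
      (∀ i, inp i = none ↔ inp' i = none) →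
      (∀ i X X', inp i = some X → inp' i = some X' → Alpha X X') →
      (∀ j, binp j = none ↔ binp' j = none) →
      (∀ j A A', binp j = some A → binp' j = some A' → AlphaAbs A A') →
      Alpha (.qOp d inp binp) (.qOp d inp' binp')
/-- Alpha-equivalence of quasiabstractions (the exists-fresh formulation). -/
inductive AlphaAbs : QAbs var varsort index bindex opsym →
    QAbs var varsort index bindex opsym → Prop where
  | qAbs : ∀ {xs x x' X X' y}, y ∉ ({x, x'} : Set var) →
      QFresh xs y X → QFresh xs y X' →
      Alpha (qSwap y x xs X) (qSwap y x' xs X') →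
      AlphaAbs (.qAbs xs x X) (.qAbs xs x' X')
end

/-! ### Terms and abstractions as quotients -/

variable (var varsort index bindex opsym)

/-- Terms: quasiterms modulo alpha-equivalence. -/
def Term : Type u := Quot (@Alpha var varsort index bindex opsym)

/-- Abstractions: quasiabstractions modulo alpha-equivalence. -/
def Abstr : Type u := Quot (@AlphaAbs var varsort index bindex opsym)

variable {var varsort index bindex opsym}

/-- The projection from quasiterms to terms. -/
def tmk : QTerm var varsort index bindex opsym → Term var varsort index bindex opsym :=
  Quot.mk _

/-- The projection from quasiabstractions to abstractions. -/
def amk : QAbs var varsort index bindex opsym → Abstr var varsort index bindex opsym :=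
  Quot.mk _

/-- A representative of a term. -/
noncomputable def trep (X : Term var varsort index bindex opsym) :
    QTerm var varsort index bindex opsym := Quot.out X

/-- A representative of an abstraction. -/
noncomputable def arep (A : Abstr var varsort index bindex opsym) :
    QAbs var varsort index bindex opsym := Quot.out A

/-- Good terms. -/
def good (X : Term var varsort index bindex opsym) : Prop := QGood (trep X)

/-- Good abstractions. -/
def goodAbs (A : Abstr var varsort index bindex opsym) : Prop := QGoodAbs (arep A)

/-- The variable-injection constructor on terms. -/
def Var (xs : varsort) (x : var) : Term var varsort index bindex opsym :=
  tmk (.qVar xs x)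

/-- The operation constructor on terms. -/
noncomputable def Op (d : opsym) (inp : Input index (Term var varsort index bindex opsym))
    (binp : Input bindex (Abstr var varsort index bindex opsym)) :
    Term var varsort index bindex opsym :=
  tmk (.qOp d (liftF trep inp) (liftF arep binp))

/-- The abstraction constructor. -/
noncomputable def Abs (xs : varsort) (x : var) (X : Term var varsort index bindex opsym) :
    Abstr var varsort index bindex opsym :=
  amk (.qAbs xs x (trep X))

/-- Freshness on terms. -/
def fresh (ys : varsort) (y : var) (X : Term var varsort index bindex opsym) : Prop :=
  QFresh ys y (trep X)

/-- Freshness on abstractions. -/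
def freshAbs (ys : varsort) (y : var) (A : Abstr var varsort index bindex opsym) : Prop :=
  QFreshAbs ys y (arep A)

/-- Swapping on terms. -/
noncomputable def tswap (X : Term var varsort index bindex opsym)
    (z1 z2 : var) (zs : varsort) : Term var varsort index bindex opsym :=
  tmk (qSwap z1 z2 zs (trep X))

/-! ### Substitution -/

mutual
/-- The graph of capture-avoiding substitution on quasiterms:
`QSubst X Y y ys Z` means that `Z` is a result of substituting `Y` for the free
occurrences of the variable `y` of varsort `ys` in `X` (along a capture-free
representative). -/
inductive QSubst : QTerm var varsort index bindex opsym →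
    QTerm var varsort index bindex opsym → var → varsort →
    QTerm var varsort index bindex opsym → Prop where
  | var_eq : ∀ {Y y ys}, QSubst (.qVar ys y) Y y ys Y
  | var_ne : ∀ {Y y ys xs x}, (xs, x) ≠ (ys, y) → QSubst (.qVar xs x) Y y ys (.qVar xs x)
  | op : ∀ {Y y ys d inp binp inp' binp'},
      (∀ i, inp i = none ↔ inp' i = none) →
      (∀ i X X', inp i = some X → inp' i = some X' → QSubst X Y y ys X') →
      (∀ j, binp j = none ↔ binp' j = none) →
      (∀ j A A', binp j = some A → binp' j = some A' → QSubstAbs A Y y ys A') →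
      QSubst (.qOp d inp binp) Y y ys (.qOp d inp' binp')
/-- The graph of capture-avoiding substitution on quasiabstractions. -/
inductive QSubstAbs : QAbs var varsort index bindex opsym →
    QTerm var varsort index bindex opsym → var → varsort →
    QAbs var varsort index bindex opsym → Prop where
  | abs : ∀ {Y y ys xs x X X'}, (xs, x) ≠ (ys, y) → QFresh xs x Y →
      QSubst X Y y ys X' → QSubstAbs (.qAbs xs x X) Y y ys (.qAbs xs x X')
end

/-- The graph of capture-avoiding substitution on terms. -/
def SubstRel (X Y : Term var varsort index bindex opsym) (y : var) (ys : varsort)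
    (Z : Term var varsort index bindex opsym) : Prop :=
  ∃ qX qZ, tmk qX = X ∧ tmk qZ = Z ∧ QSubst qX (trep Y) y ys qZ

/-- Capture-avoiding substitution on terms: `subst X Y y ys` is `X[Y/y]_ys`. -/
noncomputable def subst (X Y : Term var varsort index bindex opsym)
    (y : var) (ys : varsort) : Term var varsort index bindex opsym :=
  if h : ∃ Z, SubstRel X Y y ys Z then h.choose else X

/-- The graph of capture-avoiding substitution on abstractions. -/
def SubstAbsRel (A : Abstr var varsort index bindex opsym)
    (Y : Term var varsort index bindex opsym) (y : var) (ys : varsort)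
    (B : Abstr var varsort index bindex opsym) : Prop :=
  ∃ qA qB, amk qA = A ∧ amk qB = B ∧ QSubstAbs qA (trep Y) y ys qB

/-- Capture-avoiding substitution on abstractions: `substAbs A Y y ys` is `A[Y/y]_ys`. -/
noncomputable def substAbs (A : Abstr var varsort index bindex opsym)
    (Y : Term var varsort index bindex opsym) (y : var) (ys : varsort) :
    Abstr var varsort index bindex opsym :=
  if h : ∃ B, SubstAbsRel A Y y ys B then h.choose else A

/-! ### Parallel substitution -/

mutual
/-- The graph of capture-avoiding parallel substitution on quasiterms, along an
assignment `ρ : varsort → var → Option qterm`. -/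
inductive QPSubst : QTerm var varsort index bindex opsym →
    (varsort → var → Option (QTerm var varsort index bindex opsym)) →
    QTerm var varsort index bindex opsym → Prop where
  | var_some : ∀ {ρ xs x Y}, ρ xs x = some Y → QPSubst (.qVar xs x) ρ Y
  | var_none : ∀ {ρ xs x}, ρ xs x = none → QPSubst (.qVar xs x) ρ (.qVar xs x)
  | op : ∀ {ρ d inp binp inp' binp'},
      (∀ i, inp i = none ↔ inp' i = none) →
      (∀ i X X', inp i = some X → inp' i = some X' → QPSubst X ρ X') →
      (∀ j, binp j = none ↔ binp' j = none) →
      (∀ j A A', binp j = some A → binp' j = some A' → QPSubstAbs A ρ A') →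
      QPSubst (.qOp d inp binp) ρ (.qOp d inp' binp')
/-- The graph of capture-avoiding parallel substitution on quasiabstractions. -/
inductive QPSubstAbs : QAbs var varsort index bindex opsym →
    (varsort → var → Option (QTerm var varsort index bindex opsym)) →
    QAbs var varsort index bindex opsym → Prop where
  | abs : ∀ {ρ xs x X X'}, ρ xs x = none →
      (∀ ys y Y, ρ ys y = some Y → QFresh xs x Y) →
      QPSubst X ρ X' → QPSubstAbs (.qAbs xs x X) ρ (.qAbs xs x X')
end

/-- Turning a term-valued assignment into a quasiterm-valued one, by picking
representatives. -/
noncomputable def qassign (ρ : varsort → var → Option (Term var varsort index bindex opsym)) :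
    varsort → var → Option (QTerm var varsort index bindex opsym) :=
  fun xs x => (ρ xs x).map trep

/-- The graph of parallel substitution on terms. -/
def PSubstRel (X : Term var varsort index bindex opsym)
    (ρ : varsort → var → Option (Term var varsort index bindex opsym))
    (Z : Term var varsort index bindex opsym) : Prop :=
  ∃ qX qZ, tmk qX = X ∧ tmk qZ = Z ∧ QPSubst qX (qassign ρ) qZ

/-- Capture-avoiding parallel substitution on terms: `psubst X ρ` is `X[ρ]`. -/
noncomputable def psubst (X : Term var varsort index bindex opsym)
    (ρ : varsort → var → Option (Term var varsort index bindex opsym)) :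
    Term var varsort index bindex opsym :=
  if h : ∃ Z, PSubstRel X ρ Z then h.choose else X

/-- The graph of parallel substitution on abstractions. -/
def PSubstAbsRel (A : Abstr var varsort index bindex opsym)
    (ρ : varsort → var → Option (Term var varsort index bindex opsym))
    (B : Abstr var varsort index bindex opsym) : Prop :=
  ∃ qA qB, amk qA = A ∧ amk qB = B ∧ QPSubstAbs qA (qassign ρ) qB

/-- Capture-avoiding parallel substitution on abstractions. -/
noncomputable def psubstAbs (A : Abstr var varsort index bindex opsym)
    (ρ : varsort → var → Option (Term var varsort index bindex opsym)) :
    Abstr var varsort index bindex opsym :=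
  if h : ∃ B, PSubstAbsRel A ρ B then h.choose else A


/-!
Freshness is invariant under alpha-equivalence, because an abstraction may trade its binder
for any variable fresh in its body; so on terms it can be read off any representative.
A good quasiterm has fewer than `|var|` non-fresh variables (`|var|` being regular), so the
binders of a representative of `X` can be renamed apart from `y` and from the free variables
of `Y`, alpha-equivalence being equivariant under sorted permutations. On that representative
the substitution graph `QSubst` is defined, and along `QSubst` the equivalence holds by
induction.
-/

section Inputs

variable {α α' β γ β' γ' : Type u}

-- The paper's `↑R` for a binary relation `R`.
def liftR (R : β → γ → Prop) (inp : Input α β) (inp' : Input α γ) : Prop :=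
  ∀ a, Option.Rel R (inp a) (inp' a)

theorem liftR_iff {R : β → γ → Prop} {inp : Input α β} {inp' : Input α γ} :
    liftR R inp inp' ↔ (∀ a, inp a = none ↔ inp' a = none) ∧
      ∀ a b c, inp a = some b → inp' a = some c → R b c := by
  refine ⟨fun h => ⟨fun a => ?_, fun a b c hb hc => ?_⟩, fun ⟨hdom, hrel⟩ a => ?_⟩
  · have := h a
    revert this
    cases inp a <;> cases inp' a <;> simp
  · simpa [hb, hc] using h a
  · rcases hb : inp a with _ | b <;> rcases hc : inp' a with _ | c
    · exact .none
    · simpa [hb, hc] using hdom a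
    · simpa [hb, hc] using hdom a
    · exact .some (hrel a b c hb hc)

theorem liftR.symm {R : β → γ → Prop} {inp : Input α β} {inp' : Input α γ}
    (h : liftR R inp inp') : liftR (fun c b => R b c) inp' inp := fun a => by
  have := h a
  revert this
  cases inp a <;> cases inp' a <;> simp

theorem liftR.liftP_right {R : β → γ → Prop} {Q : γ → Prop} {inp : Input α β}
    {inp' : Input α γ} (h : liftR R inp inp') (hQ : liftP (fun b => ∀ c, R b c → Q c) inp) :
    liftP Q inp' := by
  intro a c hc
  obtain ⟨hdom, hrel⟩ := liftR_iff.1 h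
  rcases hb : inp a with _ | b
  · simp [(hdom a).1 hb] at hc
  · exact hQ a b hb c (hrel a b c hb hc)

theorem liftR.liftP_iff {R : β → γ → Prop} {P : β → Prop} {Q : γ → Prop} {inp : Input α β}
    {inp' : Input α γ} (h : liftR R inp inp') (hPQ : ∀ b c, R b c → (P b ↔ Q c)) :
    liftP P inp ↔ liftP Q inp' :=
  ⟨fun hP => h.liftP_right fun a b hb c hr => (hPQ b c hr).1 (hP a b hb),
    fun hQ => h.symm.liftP_right fun a c hc b hr => (hPQ b c hr).2 (hQ a c hc)⟩

theorem liftR.map {R : β → γ → Prop} {S : β' → γ' → Prop} {f : β → β'} {g : γ → γ'}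
    {inp : Input α β} {inp' : Input α γ} (h : liftR R inp inp')
    (hRS : ∀ b c, R b c → S (f b) (g c)) : liftR S (liftF f inp) (liftF g inp') := fun a => by
  show Option.Rel S ((inp a).map f) ((inp' a).map g)
  have := h a
  revert this
  cases inp a <;> cases inp' a <;> simp_all

theorem liftR.map_left {R : β → γ → Prop} {S : β' → γ → Prop} {f : β → β'}
    {inp : Input α β} {inp' : Input α γ} (h : liftR R inp inp')
    (hRS : ∀ b c, R b c → S (f b) c) : liftR S (liftF f inp) inp' := fun a => by
  show Option.Rel S ((inp a).map f) (inp' a)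
  have := h a
  revert this
  cases inp a <;> cases inp' a <;> simp_all

theorem exists_liftR {R : β → γ → Prop} {inp : Input α β}
    (h : liftP (fun b => ∃ c, R b c) inp) : ∃ inp', liftR R inp inp' := by
  refine Classical.axiomOfChoice fun a => ?_
  rcases hb : inp a with _ | b
  · exact ⟨none, .none⟩
  · obtain ⟨c, hc⟩ := h a b hb
    exact ⟨some c, .some hc⟩

theorem liftP_congr {P Q : β → Prop} {inp : Input α β}
    (h : liftP (fun b => P b ↔ Q b) inp) : liftP P inp ↔ liftP Q inp :=
  forall₂_congr fun a b => imp_congr_right fun hb => h a b hb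

theorem liftP_liftF {P : γ → Prop} {f : β → γ} {inp : Input α β} :
    liftP P (liftF f inp) ↔ liftP (fun b => P (f b)) inp := by
  simp [liftP, liftF]

theorem idom_liftF {f : β → γ} {inp : Input α β} : idom (liftF f inp) = idom inp := by
  ext a
  simp [idom, liftF]

theorem liftF_liftF_eq {f : β → γ} {g : α' → β} {k : α' → γ} {inp : Input α α'}
    (h : liftP (fun b => f (g b) = k b) inp) : liftF f (liftF g inp) = liftF k inp := by
  funext a
  rcases hb : inp a with _ | b
  · simp [liftF, hb]
  · simp [liftF, hb, h a b hb]

theorem liftF_eq_self {f : β → β} {inp : Input α β} (h : liftP (fun b => f b = b) inp) :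
    liftF f inp = inp := by
  funext a
  rcases hb : inp a with _ | b
  · simp [liftF, hb]
  · simp [liftF, hb, h a b hb]

theorem liftP_or_and {A B : Prop} {P Q : β → Prop} {inp : Input α β} :
    liftP (fun b => (A ∨ P b) ∧ (Q b ∨ B)) inp ↔ (A ∨ liftP P inp) ∧ (liftP Q inp ∨ B) := by
  by_cases hA : A <;> by_cases hB : B <;> simp [liftP, hA, hB, forall_and]

end Inputs

theorem QTerm.mutual_induction {P : QTerm var varsort index bindex opsym → Prop}
    {Q : QAbs var varsort index bindex opsym → Prop}
    (qVar : ∀ xs x, P (.qVar xs x))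
    (qOp : ∀ d inp binp, liftP P inp → liftP Q binp → P (.qOp d inp binp))
    (qAbs : ∀ xs x X, P X → Q (.qAbs xs x X)) :
    (∀ X, P X) ∧ ∀ A, Q A := by
  have hnone : ∀ {γ : Type u} {R : γ → Prop} (c : γ), none = some c → R c := nofun
  have hsome : ∀ {γ : Type u} {R : γ → Prop} (b : γ), R b → ∀ c, some b = some c → R c :=
    fun b hb c h => Option.some_injective _ h ▸ hb
  exact ⟨fun X => QTerm.rec (motive_3 := fun o => ∀ X, o = some X → P X)
      (motive_4 := fun o => ∀ A, o = some A → Q A) qVar qOp qAbs hnone hsome hnone hsome X,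
    fun A => QAbs.rec (motive_3 := fun o => ∀ X, o = some X → P X)
      (motive_4 := fun o => ∀ A, o = some A → Q A) qVar qOp qAbs hnone hsome hnone hsome A⟩

noncomputable def qRename (σ : varsort → Equiv.Perm var) :
    QTerm var varsort index bindex opsym → QTerm var varsort index bindex opsym :=
  QTerm.rec (motive_1 := fun _ => QTerm var varsort index bindex opsym)
    (motive_2 := fun _ => QAbs var varsort index bindex opsym)
    (motive_3 := fun _ => Option (QTerm var varsort index bindex opsym))
    (motive_4 := fun _ => Option (QAbs var varsort index bindex opsym))
    (fun xs x => .qVar xs (σ xs x))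
    (fun d _ _ rinp rbinp => .qOp d rinp rbinp)
    (fun xs x _ rX => .qAbs xs (σ xs x) rX)
    none (fun _ r => some r) none (fun _ r => some r)

noncomputable def qRenameAbs (σ : varsort → Equiv.Perm var) :
    QAbs var varsort index bindex opsym → QAbs var varsort index bindex opsym :=
  QAbs.rec (motive_1 := fun _ => QTerm var varsort index bindex opsym)
    (motive_2 := fun _ => QAbs var varsort index bindex opsym)
    (motive_3 := fun _ => Option (QTerm var varsort index bindex opsym))
    (motive_4 := fun _ => Option (QAbs var varsort index bindex opsym))
    (fun xs x => .qVar xs (σ xs x))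
    (fun d _ _ rinp rbinp => .qOp d rinp rbinp)
    (fun xs x _ rX => .qAbs xs (σ xs x) rX)
    none (fun _ r => some r) none (fun _ r => some r)

section Renaming

variable (σ : varsort → Equiv.Perm var)

@[simp] theorem qRename_qVar (xs : varsort) (x : var) :
    qRename σ (.qVar xs x : QTerm var varsort index bindex opsym) = .qVar xs (σ xs x) := rfl

@[simp] theorem qRename_qOp (d : opsym) (inp : Input index (QTerm var varsort index bindex opsym))
    (binp : Input bindex (QAbs var varsort index bindex opsym)) :
    qRename σ (.qOp d inp binp) = .qOp d (liftF (qRename σ) inp) (liftF (qRenameAbs σ) binp) := by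
  show QTerm.qOp _ _ _ = _
  congr 1 <;> funext a <;> unfold liftF
  · cases inp a <;> rfl
  · cases binp a <;> rfl

@[simp] theorem qRenameAbs_qAbs (xs : varsort) (x : var)
    (X : QTerm var varsort index bindex opsym) :
    qRenameAbs σ (.qAbs xs x X) = .qAbs xs (σ xs x) (qRename σ X) := rfl

theorem qRename_qRename (τ : varsort → Equiv.Perm var)
    (X : QTerm var varsort index bindex opsym) :
    qRename σ (qRename τ X) = qRename (σ * τ) X :=
  (QTerm.mutual_induction (P := fun X => qRename σ (qRename τ X) = qRename (σ * τ) X)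
    (Q := fun A => qRenameAbs σ (qRenameAbs τ A) = qRenameAbs (σ * τ) A)
    (fun _ _ => rfl)
    (fun _ _ _ ih₁ ih₂ => by
      simp only [qRename_qOp, liftF_liftF_eq ih₁, liftF_liftF_eq ih₂])
    (fun _ _ _ ih => by simp only [qRenameAbs_qAbs, ih]; rfl)).1 X

theorem qRename_one (X : QTerm var varsort index bindex opsym) : qRename 1 X = X :=
  (QTerm.mutual_induction (P := fun X => qRename 1 X = X) (Q := fun A => qRenameAbs 1 A = A)
    (fun _ _ => rfl)
    (fun _ _ _ ih₁ ih₂ => by simp only [qRename_qOp, liftF_eq_self ih₁, liftF_eq_self ih₂])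
    (fun _ _ _ ih => by simp only [qRenameAbs_qAbs, ih]; rfl)).1 X

end Renaming

theorem qSwap_eq_qRename (z₁ z₂ : var) (zs : varsort) :
    qSwap z₁ z₂ zs = qRename (index := index) (bindex := bindex) (opsym := opsym)
      (Pi.mulSingle zs (Equiv.swap z₁ z₂)) := by
  have h : ∀ xs x, swapVarS var varsort zs xs z₁ z₂ x =
      (Pi.mulSingle zs (Equiv.swap z₁ z₂) : varsort → Equiv.Perm var) xs x := by
    intro xs x
    rcases eq_or_ne xs zs with rfl | h
    · simp [swapVarS, swapVar, Equiv.swap_apply_def]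
    · simp [swapVarS, h]
  unfold qSwap qRename
  simp only [h]

theorem qSwap_qSwap (z₁ z₂ : var) (zs : varsort) (X : QTerm var varsort index bindex opsym) :
    qSwap z₁ z₂ zs (qSwap z₁ z₂ zs X) = X := by
  rw [qSwap_eq_qRename, qRename_qRename, ← Pi.mulSingle_mul, Equiv.swap_mul_self,
    Pi.mulSingle_one, qRename_one]

theorem mulSingle_swap_apply_mul (σ : varsort → Equiv.Perm var) (xs : varsort) (a b : var) :
    Pi.mulSingle xs (Equiv.swap (σ xs a) (σ xs b)) * σ = σ * Pi.mulSingle xs (Equiv.swap a b) := by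
  funext vs
  rcases eq_or_ne vs xs with rfl | h
  · simp [Equiv.swap_apply_apply, mul_assoc]
  · simp [Pi.mulSingle_eq_of_ne h]

theorem qGood_qRename {X : QTerm var varsort index bindex opsym} (hX : QGood X)
    (σ : varsort → Equiv.Perm var) : QGood (qRename σ X) := by
  refine QGood.rec (motive_1 := fun X _ => QGood (qRename σ X))
    (motive_2 := fun A _ => QGoodAbs (qRenameAbs σ A)) .qVar ?_ (fun _ ih => .qAbs ih) hX
  intro d inp binp _ _ hinp hbinp ih₁ ih₂
  rw [qRename_qOp]
  exact .qOp (liftP_liftF.2 ih₁) (liftP_liftF.2 ih₂) (by rwa [smallDom, idom_liftF])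
    (by rwa [smallDom, idom_liftF])

section Freshness

variable {zs : varsort} {z : var}

theorem qFresh_qVar_iff {xs : varsort} {x : var} :
    QFresh zs z (.qVar xs x : QTerm var varsort index bindex opsym) ↔ (zs, z) ≠ (xs, x) :=
  ⟨fun | .qVar h => h, .qVar⟩

theorem qFresh_qOp_iff {d : opsym} {inp : Input index (QTerm var varsort index bindex opsym)}
    {binp : Input bindex (QAbs var varsort index bindex opsym)} :
    QFresh zs z (.qOp d inp binp) ↔ liftP (QFresh zs z) inp ∧ liftP (QFreshAbs zs z) binp :=
  ⟨fun | .qOp h₁ h₂ => ⟨h₁, h₂⟩, fun ⟨h₁, h₂⟩ => .qOp h₁ h₂⟩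

theorem qFreshAbs_qAbs_iff {xs : varsort} {x : var} {X : QTerm var varsort index bindex opsym} :
    QFreshAbs zs z (.qAbs xs x X) ↔ (zs, z) = (xs, x) ∨ QFresh zs z X := by
  refine ⟨fun | .qAbs_bound => .inl rfl | .qAbs_body h => .inr h, ?_⟩
  rintro (h | h)
  · obtain ⟨rfl, rfl⟩ := Prod.mk.inj h
    exact .qAbs_bound
  · exact .qAbs_body h

theorem prod_mk_perm_apply_eq_iff (σ : varsort → Equiv.Perm var) {xs : varsort} {x : var} :
    (zs, σ zs z) = (xs, σ xs x) ↔ (zs, z) = (xs, x) := by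
  rcases eq_or_ne zs xs with rfl | h <;> simp [*]

theorem qFresh_qRename_apply_iff (σ : varsort → Equiv.Perm var)
    (X : QTerm var varsort index bindex opsym) :
    QFresh zs (σ zs z) (qRename σ X) ↔ QFresh zs z X :=
  (QTerm.mutual_induction
    (P := fun X => ∀ zs z, QFresh zs (σ zs z) (qRename σ X) ↔ QFresh zs z X)
    (Q := fun A => ∀ zs z, QFreshAbs zs (σ zs z) (qRenameAbs σ A) ↔ QFreshAbs zs z A)
    (fun _ _ _ _ => by
      simp only [qRename_qVar, qFresh_qVar_iff, ne_eq, prod_mk_perm_apply_eq_iff])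
    (fun _ _ _ ih₁ ih₂ zs z => by
      rw [qRename_qOp, qFresh_qOp_iff, qFresh_qOp_iff, liftP_liftF, liftP_liftF,
        liftP_congr fun a X hX => ih₁ a X hX zs z, liftP_congr fun a A hA => ih₂ a A hA zs z])
    (fun _ _ _ ih zs z => by
      rw [qRenameAbs_qAbs, qFreshAbs_qAbs_iff, qFreshAbs_qAbs_iff, prod_mk_perm_apply_eq_iff,
        ih])).1 X zs z

theorem qFresh_qRename_iff (σ : varsort → Equiv.Perm var)
    (X : QTerm var varsort index bindex opsym) :
    QFresh zs z (qRename σ X) ↔ QFresh zs ((σ zs)⁻¹ z) X := by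
  simpa using qFresh_qRename_apply_iff σ X (zs := zs) (z := (σ zs)⁻¹ z)

theorem qFresh_qSwap_iff {a b : var} {xs : varsort} {X : QTerm var varsort index bindex opsym} :
    QFresh zs z (qSwap a b xs X) ↔
      QFresh zs ((Pi.mulSingle xs (Equiv.swap a b) : varsort → Equiv.Perm var) zs z) X := by
  rw [qSwap_eq_qRename, qFresh_qRename_iff]
  rcases eq_or_ne zs xs with rfl | h
  · simp [Equiv.swap_inv]
  · simp [Pi.mulSingle_eq_of_ne h]

theorem qFreshAbs_qAbs_iff_of_qFresh {xs : varsort} {x u : var}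
    {X : QTerm var varsort index bindex opsym} (hu : QFresh xs u X) :
    QFreshAbs zs z (.qAbs xs x X) ↔ (zs, z) = (xs, u) ∨ QFresh zs z (qSwap u x xs X) := by
  rw [qFreshAbs_qAbs_iff, qFresh_qSwap_iff]
  rcases eq_or_ne zs xs with rfl | h
  · rcases eq_or_ne z u with rfl | hzu
    · simp [hu]
    rcases eq_or_ne z x with rfl | hzx
    · simp [hu]
    · simp [hzu, hzx, Equiv.swap_apply_of_ne_of_ne]
  · simp [h]

theorem Alpha.qFresh_iff {X X' : QTerm var varsort index bindex opsym} (h : Alpha X X')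
    (zs : varsort) (z : var) : QFresh zs z X ↔ QFresh zs z X' := by
  refine Alpha.rec (motive_1 := fun X X' _ => ∀ zs z, QFresh zs z X ↔ QFresh zs z X')
    (motive_2 := fun A A' _ => ∀ zs z, QFreshAbs zs z A ↔ QFreshAbs zs z A')
    (fun _ _ => Iff.rfl) ?_ ?_ h zs z
  · intro d inp binp inp' binp' hd₁ _ hd₂ _ ih₁ ih₂ zs z
    rw [qFresh_qOp_iff, qFresh_qOp_iff,
      (liftR_iff.2 ⟨hd₁, ih₁⟩).liftP_iff (Q := QFresh zs z) fun _ _ h => h zs z,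
      (liftR_iff.2 ⟨hd₂, ih₂⟩).liftP_iff (Q := QFreshAbs zs z) fun _ _ h => h zs z]
  · intro xs x x' X X' u _ hu hu' _ ih zs z
    rw [qFreshAbs_qAbs_iff_of_qFresh hu, qFreshAbs_qAbs_iff_of_qFresh hu', ih]

end Freshness

theorem Alpha.qOp_of_liftR {d : opsym}
    {inp inp' : Input index (QTerm var varsort index bindex opsym)}
    {binp binp' : Input bindex (QAbs var varsort index bindex opsym)}
    (h₁ : liftR Alpha inp inp') (h₂ : liftR AlphaAbs binp binp') :
    Alpha (.qOp d inp binp) (.qOp d inp' binp') :=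
  .qOp (liftR_iff.1 h₁).1 (liftR_iff.1 h₁).2 (liftR_iff.1 h₂).1 (liftR_iff.1 h₂).2

theorem Alpha.rename {X X' : QTerm var varsort index bindex opsym} (h : Alpha X X')
    (σ : varsort → Equiv.Perm var) : Alpha (qRename σ X) (qRename σ X') := by
  refine Alpha.rec (motive_1 := fun X X' _ => ∀ σ, Alpha (qRename σ X) (qRename σ X'))
    (motive_2 := fun A A' _ => ∀ σ, AlphaAbs (qRenameAbs σ A) (qRenameAbs σ A'))
    (fun _ => .qVar) ?_ ?_ h σ
  · intro d inp binp inp' binp' hd₁ _ hd₂ _ ih₁ ih₂ σ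
    rw [qRename_qOp, qRename_qOp]
    exact Alpha.qOp_of_liftR ((liftR_iff.2 ⟨hd₁, ih₁⟩).map fun _ _ h => h σ)
      ((liftR_iff.2 ⟨hd₂, ih₂⟩).map fun _ _ h => h σ)
  · intro xs x x' X X' u hu hfu hfu' _ ih σ
    rw [qRenameAbs_qAbs, qRenameAbs_qAbs]
    refine AlphaAbs.qAbs (y := σ xs u) (by simpa using hu)
      ((qFresh_qRename_apply_iff σ X).2 hfu) ((qFresh_qRename_apply_iff σ X').2 hfu') ?_
    rw [qSwap_eq_qRename, qSwap_eq_qRename, qRename_qRename, qRename_qRename,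
      mulSingle_swap_apply_mul, mulSingle_swap_apply_mul, ← qRename_qRename, ← qRename_qRename,
      ← qSwap_eq_qRename, ← qSwap_eq_qRename]
    exact ih σ

section Smallness

open Cardinal

theorem mk_iUnion_lt_of_smallDom (hreg : (#var).IsRegular) {α β : Type u} {inp : Input α β}
    (hinp : smallDom var inp)
    {S : β → Set var} (hS : liftP (fun b => #(S b) < #var) inp) :
    #(⋃ a, ⋃ b ∈ inp a, S b) < #var := by
  have hsub : (⋃ a, ⋃ b ∈ inp a, S b) ⊆ ⋃ a ∈ idom inp, ⋃ b ∈ inp a, S b := by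
    intro z hz
    simp only [Set.mem_iUnion] at hz ⊢
    obtain ⟨a, b, hb, hz⟩ := hz
    exact ⟨a, by simp [idom, Option.mem_def.1 hb], b, hb, hz⟩
  refine (mk_le_mk_of_subset hsub).trans_lt
    ((card_biUnion_lt_iff_forall_of_isRegular hreg hinp).2 fun a ha => ?_)
  obtain ⟨b, hb⟩ := Option.ne_none_iff_exists'.1 ha
  simpa [hb] using hS a b hb

theorem mk_not_qFresh_lt (hreg : (#var).IsRegular) {X : QTerm var varsort index bindex opsym}
    (hX : QGood X) (xs : varsort) : #{z | ¬ QFresh xs z X} < #var := by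
  refine QGood.rec (motive_1 := fun X _ => #{z | ¬ QFresh xs z X} < #var)
    (motive_2 := fun A _ => #{z | ¬ QFreshAbs xs z A} < #var) ?_ ?_ ?_ hX
  · intro ys y
    have hsub : {z | ¬ QFresh xs z (.qVar ys y : QTerm var varsort index bindex opsym)} ⊆ {y} := by
      intro z hz
      by_contra hzy
      exact hz (qFresh_qVar_iff.2 fun h => hzy (Prod.mk.inj h).2)
    exact ((Set.finite_singleton y).subset hsub).lt_aleph0.trans_le hreg.aleph0_le
  · intro d inp binp _ _ hinp hbinp ih₁ ih₂
    have hsub : {z | ¬ QFresh xs z (.qOp d inp binp)} ⊆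
        (⋃ a, ⋃ X ∈ inp a, {z | ¬ QFresh xs z X}) ∪
          ⋃ a, ⋃ A ∈ binp a, {z | ¬ QFreshAbs xs z A} := by
      intro z hz
      by_contra hz'
      simp only [Set.mem_union, Set.mem_iUnion, Set.mem_ofPred_eq, not_or, not_exists,
        not_not] at hz'
      exact hz (qFresh_qOp_iff.2 ⟨fun a X hX => hz'.1 a X hX, fun a A hA => hz'.2 a A hA⟩)
    exact (mk_le_mk_of_subset hsub).trans_lt ((mk_union_le _ _).trans_lt
      (add_lt_of_lt hreg.aleph0_le (mk_iUnion_lt_of_smallDom hreg hinp ih₁)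
        (mk_iUnion_lt_of_smallDom hreg hbinp ih₂)))
  · intro ys y X _ ih
    refine (mk_le_mk_of_subset fun z hz => ?_).trans_lt ih
    exact fun hX => hz (qFreshAbs_qAbs_iff.2 (.inr hX))

theorem exists_qFresh (hreg : (#var).IsRegular) {s : Set var} (hs : s.Finite) (xs : varsort)
    {X₁ X₂ : QTerm var varsort index bindex opsym} (h₁ : QGood X₁) (h₂ : QGood X₂) :
    ∃ z ∉ s, QFresh xs z X₁ ∧ QFresh xs z X₂ := by
  have hsmall : #↥(s ∪ {z | ¬ QFresh xs z X₁} ∪ {z | ¬ QFresh xs z X₂}) < #var :=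
    (mk_union_le _ _).trans_lt (add_lt_of_lt hreg.aleph0_le
      ((mk_union_le _ _).trans_lt (add_lt_of_lt hreg.aleph0_le
        (hs.lt_aleph0.trans_le hreg.aleph0_le) (mk_not_qFresh_lt hreg h₁ xs)))
      (mk_not_qFresh_lt hreg h₂ xs))
  obtain ⟨z, hz⟩ := compl_nonempty_of_mk_lt_mk hsmall
  simp only [Set.mem_compl_iff, Set.mem_union, Set.mem_ofPred_eq, not_or, not_not] at hz
  exact ⟨z, hz.1.1, hz.1.2, hz.2⟩

end Smallness

theorem QSubst.qFresh_iff {X Y Z : QTerm var varsort index bindex opsym} {y : var} {ys : varsort}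
    (h : QSubst X Y y ys Z) (zs : varsort) (z : var) :
    QFresh zs z Z ↔ ((zs, z) = (ys, y) ∨ QFresh zs z X) ∧ (QFresh ys y X ∨ QFresh zs z Y) := by
  refine QSubst.rec
    (motive_1 := fun X Y y ys Z _ => ∀ zs z, QFresh zs z Z ↔
      ((zs, z) = (ys, y) ∨ QFresh zs z X) ∧ (QFresh ys y X ∨ QFresh zs z Y))
    (motive_2 := fun A Y y ys B _ => ∀ zs z, QFreshAbs zs z B ↔
      ((zs, z) = (ys, y) ∨ QFreshAbs zs z A) ∧ (QFreshAbs ys y A ∨ QFresh zs z Y))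
    ?_ ?_ ?_ ?_ h zs z
  · intro Y y ys zs z
    simp [qFresh_qVar_iff, em]
  · intro Y y ys xs x hne zs z
    simp only [qFresh_qVar_iff]
    refine ⟨fun h => ⟨.inr h, .inl (Ne.symm hne)⟩, ?_⟩
    rintro ⟨h | h, -⟩
    · rw [h]
      exact Ne.symm hne
    · exact h
  · intro Y y ys d inp binp inp' binp' hd₁ _ hd₂ _ ih₁ ih₂ zs z
    rw [qFresh_qOp_iff, qFresh_qOp_iff, qFresh_qOp_iff,
      ← (liftR_iff.2 ⟨hd₁, ih₁⟩).liftP_iff fun _ _ h => (h zs z).symm,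
      ← (liftR_iff.2 ⟨hd₂, ih₂⟩).liftP_iff fun _ _ h => (h zs z).symm,
      liftP_or_and, liftP_or_and]
    tauto
  · intro Y y ys xs x X X' hne hxY _ ih zs z
    rw [qFreshAbs_qAbs_iff, qFreshAbs_qAbs_iff, qFreshAbs_qAbs_iff]
    by_cases hzx : (zs, z) = (xs, x)
    · obtain ⟨rfl, rfl⟩ := Prod.mk.inj hzx
      simp [hxY]
    · simp only [hzx, ih, Ne.symm hne, false_or]

theorem QSubst.qOp_of_liftR {Y : QTerm var varsort index bindex opsym} {y : var} {ys : varsort}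
    {d : opsym} {inp inp' : Input index (QTerm var varsort index bindex opsym)}
    {binp binp' : Input bindex (QAbs var varsort index bindex opsym)}
    (h₁ : liftR (fun X X' => QSubst X Y y ys X') inp inp')
    (h₂ : liftR (fun A A' => QSubstAbs A Y y ys A') binp binp') :
    QSubst (.qOp d inp binp) Y y ys (.qOp d inp' binp') :=
  .op (liftR_iff.1 h₁).1 (liftR_iff.1 h₁).2 (liftR_iff.1 h₂).1 (liftR_iff.1 h₂).2

-- Generalized over `σ` because the abstraction case recurses on a renamed body.
theorem exists_alpha_qSubst (hreg : (Cardinal.mk var).IsRegular)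
    {Y : QTerm var varsort index bindex opsym} (hY : QGood Y) (y : var) (ys : varsort)
    {X : QTerm var varsort index bindex opsym} (hX : QGood X) (σ : varsort → Equiv.Perm var) :
    ∃ X', Alpha (qRename σ X) X' ∧ ∃ Z, QSubst X' Y y ys Z := by
  refine QGood.rec
    (motive_1 := fun X _ => ∀ σ, ∃ X', Alpha (qRename σ X) X' ∧ ∃ Z, QSubst X' Y y ys Z)
    (motive_2 := fun A _ => ∀ σ, ∃ A', AlphaAbs (qRenameAbs σ A) A' ∧ ∃ B, QSubstAbs A' Y y ys B)
    ?_ ?_ ?_ hX σ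
  · intro xs x σ
    refine ⟨_, .qVar, ?_⟩
    by_cases h : (xs, σ xs x) = (ys, y)
    · obtain ⟨rfl, hx⟩ := Prod.mk.inj h
      rw [hx]
      exact ⟨Y, .var_eq⟩
    · exact ⟨_, .var_ne h⟩
  · intro d inp binp _ _ _ _ ih₁ ih₂ σ
    obtain ⟨inp', h₁⟩ := exists_liftR fun a X hX => ih₁ a X hX σ
    obtain ⟨binp', h₂⟩ := exists_liftR fun a A hA => ih₂ a A hA σ
    obtain ⟨inpZ, hZ₁⟩ := exists_liftR (h₁.liftP_right fun _ _ _ _ h => h.2)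
    obtain ⟨binpZ, hZ₂⟩ := exists_liftR (h₂.liftP_right fun _ _ _ _ h => h.2)
    refine ⟨.qOp d inp' binp', ?_, _, QSubst.qOp_of_liftR hZ₁ hZ₂⟩
    rw [qRename_qOp]
    exact Alpha.qOp_of_liftR (h₁.map_left fun _ _ h => h.1) (h₂.map_left fun _ _ h => h.1)
  · intro xs x X₀ hX₀ ih σ
    rw [qRenameAbs_qAbs]
    set a := σ xs x
    set V := qRename σ X₀
    have hV : QGood V := qGood_qRename hX₀ σ
    obtain ⟨z, hz, hzV, hzY⟩ := exists_qFresh hreg (s := {a, y}) (Set.toFinite _) xs hV hY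
    obtain ⟨w, hw, hwV, -⟩ := exists_qFresh hreg (s := {a, z}) (Set.toFinite _) xs hV hV
    simp only [Set.mem_insert_iff, Set.mem_singleton_iff, not_or] at hz hw
    -- the body is renamed so that swapping `w` and `z` back yields `V` with `a` renamed to `w`
    obtain ⟨X', hX', Z, hZ⟩ :=
      ih (Pi.mulSingle xs (Equiv.swap w z) * (Pi.mulSingle xs (Equiv.swap w a) * σ))
    rw [← qRename_qRename, ← qRename_qRename, ← qSwap_eq_qRename, ← qSwap_eq_qRename] at hX'
    refine ⟨.qAbs xs z X', .qAbs (y := w) (by simp [hw.1, hw.2]) hwV ?_ ?_,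
      .qAbs xs z Z, .abs (fun h => hz.2 (Prod.mk.inj h).2) hzY hZ⟩
    · rw [← hX'.qFresh_iff, qFresh_qSwap_iff, qFresh_qSwap_iff]
      simpa [Equiv.swap_apply_of_ne_of_ne (Ne.symm hw.2) hz.1] using hzV
    · have h := hX'.rename (Pi.mulSingle xs (Equiv.swap w z))
      rwa [← qSwap_eq_qRename, qSwap_qSwap] at h

theorem fresh_tmk {zs : varsort} {z : var} {X : QTerm var varsort index bindex opsym} :
    fresh zs z (tmk X) ↔ QFresh zs z X :=
  Iff.of_eq <| congrArg (Quot.lift (QFresh zs z) fun _ _ h => propext (h.qFresh_iff zs z))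
    (Quot.out_eq (tmk X))

theorem exists_substRel (hreg : (Cardinal.mk var).IsRegular)
    {X Y : Term var varsort index bindex opsym} (hX : good X) (hY : good Y) (y : var)
    (ys : varsort) : ∃ Z, SubstRel X Y y ys Z := by
  obtain ⟨X', hX', Z, hZ⟩ := exists_alpha_qSubst hreg hY y ys hX 1
  rw [qRename_one] at hX'
  exact ⟨tmk Z, X', Z, (Quot.sound hX').symm.trans (Quot.out_eq X), rfl, hZ⟩

theorem substRel_subst {X Y : Term var varsort index bindex opsym} {y : var} {ys : varsort}
    (h : ∃ Z, SubstRel X Y y ys Z) : SubstRel X Y y ys (subst X Y y ys) := by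
  rw [subst, dif_pos h]
  exact h.choose_spec

/-- freshness for a substituted term decomposes into freshness for
its participants. -/
theorem fresh_subst (hinf : Cardinal.aleph0 ≤ Cardinal.mk var)
    (hreg : (Cardinal.mk var).IsRegular)
    (X Y : Term var varsort index bindex opsym) (hX : good X) (hY : good Y)
    (y z : var) (ys zs : varsort) :
    fresh zs z (subst X Y y ys) ↔
      (((zs, z) = (ys, y) ∨ fresh zs z X) ∧ (fresh ys y X ∨ fresh zs z Y)) := by
  obtain ⟨qX, qZ, rfl, hqZ, hsubst⟩ := substRel_subst (exists_substRel hreg hX hY y ys)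
  rw [← hqZ]
  simp only [fresh_tmk]
  exact hsubst.qFresh_iff zs z

end Binding
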